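/- Let K ⊆ C be convex bodies in Euclidean n-space ℝⁿ such that C is a Scott-completion of K, i.e. D(K) = D(C) = w(C) and R(K) = R(C), and assume moreover that w(K) = r(K) + R(K). For λ ∈ [0,1] set K_λ := { λ·x + (1−λ)·y : x ∈ K, y ∈ C }. Then for all λ ∈ [0,1]: r(K_λ) = λ·r(K) + (1−λ)·r(C), R(K_λ) = R(K), D(K_λ) = D(K), w(K_λ) = λ·w(K) + (1−λ)·w(C), and in particular w(K_λ) = r(K_λ) + R(K_λ). -/

import Mathlib

open Metric Set
open scoped RealInnerProductSpace

/-- The diameter of a set. -/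
noncomputable def sDiam {n : ℕ} (K : Set (EuclideanSpace ℝ (Fin n))) : ℝ :=
  Metric.diam K

/-- The circumradius: radius of the smallest enclosing closed ball. -/
noncomputable def circumradius {n : ℕ} (K : Set (EuclideanSpace ℝ (Fin n))) : ℝ :=
  sInf {ρ : ℝ | 0 ≤ ρ ∧ ∃ c, K ⊆ Metric.closedBall c ρ}

/-- The inradius: radius of a largest inscribed closed ball. -/
noncomputable def inradius {n : ℕ} (K : Set (EuclideanSpace ℝ (Fin n))) : ℝ :=
  sSup {ρ : ℝ | 0 ≤ ρ ∧ ∃ c, Metric.closedBall c ρ ⊆ K}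

/-- The (minimal) width: the smallest breadth over all directions. -/
noncomputable def width {n : ℕ} (K : Set (EuclideanSpace ℝ (Fin n))) : ℝ :=
  sInf {b : ℝ | ∃ u : EuclideanSpace ℝ (Fin n), ‖u‖ = 1 ∧
    b = sSup ((fun x => (inner ℝ u x : ℝ)) '' K) - sInf ((fun x => (inner ℝ u x : ℝ)) '' K)}

open Bornology
open scoped Pointwise

/-!
`K ⊆ K_λ ⊆ C`, and `K`, `C` have the same diameter `D` and circumradius `R`, so these are squeezed.
Support functions are affine in the combination and `C` has constant width `D`, so each breadth of
`K_λ` is `λ` times the breadth of `K` plus `(1 - λ) D`, which gives the width. For the inradius,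
`r(C) = D - R` by constant width, and combining largest balls of `K` and `C` gives
`r(K_λ) ≥ λ r(K) + (1 - λ) r(C)`. For the reverse inequality, take a direction in which a largest
ball of `K` touches the boundary of `K` and which faces the centre of a given ball in `K_λ`; there
`w(K) = r(K) + R` and constant width pin down the support functions of both `K` and `C`.
-/

theorem IsCompact.image2 {α β γ : Type*} [TopologicalSpace α] [TopologicalSpace β]
    [TopologicalSpace γ] {f : α → β → γ} {s : Set α} {t : Set β} (hs : IsCompact s)
    (ht : IsCompact t) (hf : Continuous (Function.uncurry f)) : IsCompact (image2 f s t) := by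
  rw [← image_uncurry_prod]
  exact (hs.prod ht).image hf

theorem IsCompact.exists_pos_le_add_mul {X : Type*} [TopologicalSpace X] {S : Set X}
    (hS : IsCompact S) {f g : X → ℝ} (hf : ContinuousOn f S) (hg : ContinuousOn g S)
    (hf0 : ∀ x ∈ S, 0 ≤ f x) (hfg : ∀ x ∈ S, f x = 0 → 0 < g x) :
    ∃ t > 0, ∃ ε > 0, ∀ x ∈ S, ε ≤ f x + t * g x := by
  rcases S.eq_empty_or_nonempty with rfl | hne
  · exact ⟨1, one_pos, 1, one_pos, by simp⟩
  obtain ⟨x₀, hx₀, hmin⟩ := hS.exists_isMinOn hne (f := fun x => max (f x) (g x)) (hf.sup hg)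
  set m := max (f x₀) (g x₀)
  have hm : 0 < m := by
    rcases (hf0 x₀ hx₀).lt_or_eq with h | h
    exacts [lt_max_of_lt_left h, lt_max_of_lt_right (hfg x₀ hx₀ h.symm)]
  obtain ⟨B, hB⟩ := hS.bddBelow_image hg
  set t := m / (2 * (|B| + 1))
  have ht : 0 < t := by positivity
  have htB : t * (|B| + 1) = m / 2 := by simp only [t]; field_simp
  refine ⟨t, ht, min (m / 2) (t * m), by positivity, fun x hx => ?_⟩
  have hgx : -(m / 2) ≤ t * g x := by
    have : B ≤ g x := hB (mem_image_of_mem g hx)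
    nlinarith [neg_abs_le B]
  rcases le_max_iff.1 (show m ≤ max (f x) (g x) from hmin hx) with h | h
  · exact (min_le_left _ _).trans (by linarith)
  · exact (min_le_right _ _).trans (by nlinarith [hf0 x hx])

section NormedSpace

variable {E : Type*} [NormedAddCommGroup E] [NormedSpace ℝ E] {K : Set E} {c : E} {ρ : ℝ}

theorem subset_closedBall_diam_sub [Nontrivial E] (hK : IsBounded K) (hρ : 0 ≤ ρ)
    (h : closedBall c ρ ⊆ K) : K ⊆ closedBall c (diam K - ρ) := by
  intro x hx
  obtain ⟨w, hw, hxw⟩ : ∃ w : E, ‖w‖ = 1 ∧ x - c = ‖x - c‖ • w := by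
    rcases eq_or_ne x c with rfl | hxc
    · obtain ⟨w, hw⟩ := exists_norm_eq E zero_le_one
      exact ⟨w, hw, by simp⟩
    · have : ‖x - c‖ ≠ 0 := norm_ne_zero_iff.2 (sub_ne_zero.2 hxc)
      exact ⟨‖x - c‖⁻¹ • (x - c), by simp [norm_smul, this], by simp [smul_smul, this]⟩
  have hy : c - ρ • w ∈ K := h (by simp [norm_smul, hw, abs_of_nonneg hρ])
  have hdist : dist x (c - ρ • w) = ‖x - c‖ + ρ := by
    rw [dist_eq_norm, show x - (c - ρ • w) = (‖x - c‖ + ρ) • w by rw [add_smul, ← hxw]; abel,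
      norm_smul, hw, mul_one, Real.norm_of_nonneg (by positivity)]
  rw [mem_closedBall, dist_eq_norm]
  linarith [dist_le_diam_of_mem hK hx hy]

theorem image2_smul_add_smul (s t : ℝ) (A B : Set E) :
    image2 (fun x y => s • x + t • y) A B = s • A + t • B := by
  rw [← image2_add, ← image_smul, ← image_smul, image2_image_left, image2_image_right]

theorem closedBall_smul_add_smul_subset_image2 [ProperSpace E] {s t ρ₁ ρ₂ : ℝ} (hs : 0 ≤ s)
    (ht : 0 ≤ t) (hρ₁ : 0 ≤ ρ₁) (hρ₂ : 0 ≤ ρ₂) (c₁ c₂ : E) :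
    closedBall (s • c₁ + t • c₂) (s * ρ₁ + t * ρ₂) ⊆
      image2 (fun x y => s • x + t • y) (closedBall c₁ ρ₁) (closedBall c₂ ρ₂) := by
  rw [image2_smul_add_smul, smul_closedBall _ _ hρ₁, smul_closedBall _ _ hρ₂,
    closedBall_add_closedBall (by positivity) (by positivity), Real.norm_of_nonneg hs,
    Real.norm_of_nonneg ht]

end NormedSpace

section SupportFunction

variable {E : Type*} [NormedAddCommGroup E] [InnerProductSpace ℝ E] {K L : Set E} {a u x : E}
  {ρ : ℝ}

noncomputable def supportFun (K : Set E) (u : E) : ℝ :=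
  sSup ((fun x => ⟪u, x⟫) '' K)

theorem inner_le_supportFun (hK : IsCompact K) (hx : x ∈ K) : ⟪u, x⟫ ≤ supportFun K u :=
  le_csSup (hK.bddAbove_image (by fun_prop)) (mem_image_of_mem _ hx)

theorem supportFun_le (hne : K.Nonempty) {B : ℝ} (h : ∀ x ∈ K, ⟪u, x⟫ ≤ B) :
    supportFun K u ≤ B :=
  csSup_le (hne.image _) (forall_mem_image.2 h)

theorem exists_supportFun_eq_inner (hK : IsCompact K) (hne : K.Nonempty) (u : E) :
    ∃ x ∈ K, supportFun K u = ⟪u, x⟫ := by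
  obtain ⟨x, hx, hx'⟩ :=
    (hK.image (f := fun x => ⟪u, x⟫) (by fun_prop)).sSup_mem (hne.image _)
  exact ⟨x, hx, hx'.symm⟩

theorem supportFun_mono (hne : K.Nonempty) (hL : IsCompact L) (h : K ⊆ L) :
    supportFun K u ≤ supportFun L u :=
  supportFun_le hne fun _ hx => inner_le_supportFun hL (h hx)

theorem continuous_supportFun (hK : IsCompact K) : Continuous (supportFun K) :=
  hK.continuous_sSup (f := fun u x : E => ⟪u, x⟫) (by fun_prop)

theorem inner_le_inner_add_of_mem_closedBall (hx : x ∈ closedBall a ρ) (hu : ‖u‖ = 1) :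
    ⟪u, x⟫ ≤ ⟪u, a⟫ + ρ := by
  have hxa : ‖x - a‖ ≤ ρ := by simpa [dist_eq_norm] using hx
  have := real_inner_le_norm u (x - a)
  rw [inner_sub_right, hu, one_mul] at this
  linarith

theorem inner_add_le_supportFun_of_closedBall_subset (hK : IsCompact K)
    (h : closedBall a ρ ⊆ K) (hρ : 0 ≤ ρ) (hu : ‖u‖ = 1) : ⟪u, a⟫ + ρ ≤ supportFun K u := by
  have hmem : a + ρ • u ∈ closedBall a ρ := by
    simp [norm_smul, hu, abs_of_nonneg hρ]
  simpa [inner_add_right, real_inner_smul_right, real_inner_self_eq_norm_sq, hu] using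
    inner_le_supportFun (u := u) hK (h hmem)

theorem supportFun_le_inner_add_of_subset_closedBall (hne : K.Nonempty)
    (h : K ⊆ closedBall a ρ) (hu : ‖u‖ = 1) : supportFun K u ≤ ⟪u, a⟫ + ρ :=
  supportFun_le hne fun _ hx => inner_le_inner_add_of_mem_closedBall (h hx) hu

theorem exists_supportFun_lt_inner [CompleteSpace E] (hK : IsCompact K) (hcv : Convex ℝ K)
    (hne : K.Nonempty) {z : E} (hz : z ∉ K) : ∃ u, ‖u‖ = 1 ∧ supportFun K u < ⟪u, z⟫ := by
  obtain ⟨f, s, hfK, hfz⟩ := geometric_hahn_banach_closed_point hcv hK.isClosed hz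
  set v := (InnerProductSpace.toDual ℝ E).symm f
  have hf : ∀ y, f y = ⟪v, y⟫ := fun y => by simp [v]
  obtain ⟨x, hx, hxv⟩ := exists_supportFun_eq_inner hK hne v
  have hlt : ⟪v, x⟫ < ⟪v, z⟫ := by rw [← hf, ← hf]; exact (hfK x hx).trans hfz
  have hv : v ≠ 0 := by intro h; simp [h] at hlt
  refine ⟨‖v‖⁻¹ • v, by simp [norm_smul, hv], ?_⟩
  refine (supportFun_le hne fun y hy => ?_).trans_lt (b := ‖v‖⁻¹ * ⟪v, x⟫) ?_
  · rw [real_inner_smul_left]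
    gcongr
    exact hxv ▸ inner_le_supportFun hK hy
  · rw [real_inner_smul_left]
    gcongr

theorem closedBall_subset_of_forall_inner_add_le_supportFun [CompleteSpace E] (hK : IsCompact K)
    (hcv : Convex ℝ K) (hne : K.Nonempty)
    (h : ∀ u, ‖u‖ = 1 → ⟪u, a⟫ + ρ ≤ supportFun K u) : closedBall a ρ ⊆ K := by
  intro z hz
  by_contra hzK
  obtain ⟨u, hu, hlt⟩ := exists_supportFun_lt_inner hK hcv hne hzK
  linarith [h u hu, inner_le_inner_add_of_mem_closedBall hz hu]

theorem supportFun_image2_smul_add_smul (hK : IsCompact K) (hKne : K.Nonempty) (hL : IsCompact L)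
    (hLne : L.Nonempty) {s t : ℝ} (hs : 0 ≤ s) (ht : 0 ≤ t) (u : E) :
    supportFun (image2 (fun x y => s • x + t • y) K L) u =
      s * supportFun K u + t * supportFun L u := by
  refine le_antisymm (supportFun_le (hKne.image2 hLne) ?_) ?_
  · rintro _ ⟨x, hx, y, hy, rfl⟩
    rw [inner_add_right, real_inner_smul_right, real_inner_smul_right]
    gcongr
    exacts [inner_le_supportFun hK hx, inner_le_supportFun hL hy]
  · obtain ⟨x, hx, hxu⟩ := exists_supportFun_eq_inner hK hKne u
    obtain ⟨y, hy, hyu⟩ := exists_supportFun_eq_inner hL hLne u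
    have hcp : IsCompact (image2 (fun x y => s • x + t • y) K L) := hK.image2 hL (by fun_prop)
    simpa [hxu, hyu, inner_add_right, real_inner_smul_right] using
      inner_le_supportFun (u := u) hcp (mem_image2_of_mem hx hy)

noncomputable def breadth (K : Set E) (u : E) : ℝ :=
  supportFun K u + supportFun K (-u)

theorem breadth_nonneg (hK : IsCompact K) (hne : K.Nonempty) (u : E) : 0 ≤ breadth K u := by
  obtain ⟨x, hx⟩ := hne
  have := inner_le_supportFun (u := -u) hK hx
  rw [inner_neg_left] at this
  rw [breadth]
  linarith [inner_le_supportFun (u := u) hK hx]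

theorem breadth_le_diam (hK : IsCompact K) (hne : K.Nonempty) (hu : ‖u‖ = 1) :
    breadth K u ≤ diam K := by
  obtain ⟨x, hx, hxu⟩ := exists_supportFun_eq_inner hK hne u
  obtain ⟨y, hy, hyu⟩ := exists_supportFun_eq_inner hK hne (-u)
  have := real_inner_le_norm u (x - y)
  rw [inner_sub_right, hu, one_mul, ← dist_eq_norm] at this
  rw [breadth, hxu, hyu, inner_neg_left]
  linarith [dist_le_diam_of_mem hK.isBounded hx hy]

theorem sInf_image_inner_eq_neg_supportFun (K : Set E) (u : E) :
    sInf ((fun x => ⟪u, x⟫) '' K) = -supportFun K (-u) := by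
  simp only [Real.sInf_def, supportFun, ← image_neg_eq_neg, image_image, inner_neg_left]

/-- A largest ball in `K` cannot have all its contact directions in an open half-space
`⟪u, b⟫ > 0`: otherwise, pushed a little in direction `-b`, it could be enlarged inside `K`. -/
theorem exists_contact_direction_inner_nonpos [FiniteDimensional ℝ E] (hK : IsCompact K)
    (hcv : Convex ℝ K) (hne : K.Nonempty) {r : ℝ} (hr : 0 ≤ r) (hball : closedBall a r ⊆ K)
    (hmax : ∀ c ρ, 0 ≤ ρ → closedBall c ρ ⊆ K → ρ ≤ r) (b : E) :
    ∃ u, ‖u‖ = 1 ∧ supportFun K u = ⟪u, a⟫ + r ∧ ⟪u, b⟫ ≤ 0 := by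
  by_contra! h
  obtain ⟨t, -, ε, hε, hle⟩ := (isCompact_sphere (0 : E) 1).exists_pos_le_add_mul
    (f := fun u => supportFun K u - ⟪u, a⟫ - r) (g := fun u => ⟪u, b⟫)
    (((continuous_supportFun hK).sub (by fun_prop)).sub continuous_const).continuousOn
    (by fun_prop)
    (fun u hu => by
      have := inner_add_le_supportFun_of_closedBall_subset hK hball hr
        (mem_sphere_zero_iff_norm.1 hu)
      linarith)
    (fun u hu h0 => h u (mem_sphere_zero_iff_norm.1 hu) (by linarith))
  have hbigger : closedBall (a - t • b) (r + ε) ⊆ K := by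
    refine closedBall_subset_of_forall_inner_add_le_supportFun hK hcv hne fun u hu => ?_
    have := hle u (mem_sphere_zero_iff_norm.2 hu)
    rw [inner_sub_right, real_inner_smul_right]
    linarith
  linarith [hmax _ _ (by linarith) hbigger]

end SupportFunction

section ConvexBody

variable {n : ℕ} {K L C : Set (EuclideanSpace ℝ (Fin n))} {c u : EuclideanSpace ℝ (Fin n)}
  {ρ : ℝ}

theorem circumradius_le (hρ : 0 ≤ ρ) (h : K ⊆ closedBall c ρ) : circumradius K ≤ ρ :=
  csInf_le ⟨0, fun _ hρ => hρ.1⟩ ⟨hρ, c, h⟩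

theorem circumradius_le_diam (hK : IsBounded K) (hne : K.Nonempty) :
    circumradius K ≤ diam K := by
  obtain ⟨x, hx⟩ := hne
  exact circumradius_le diam_nonneg fun y hy => dist_le_diam_of_mem hK hy hx

theorem circumradius_mono (h : K ⊆ L) (hL : IsBounded L) : circumradius K ≤ circumradius L := by
  obtain ⟨ρ, hρ, hLρ⟩ := hL.subset_closedBall_lt 0 0
  exact csInf_le_csInf ⟨0, fun _ hρ => hρ.1⟩ ⟨ρ, hρ.le, 0, hLρ⟩
    fun ρ ⟨hρ, c, hc⟩ => ⟨hρ, c, h.trans hc⟩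

theorem exists_subset_closedBall_of_circumradius_lt (hK : IsBounded K) (h : circumradius K < ρ) :
    ∃ c, K ⊆ closedBall c ρ := by
  obtain ⟨ρ₀, hρ₀, h₀⟩ := hK.subset_closedBall_lt 0 0
  obtain ⟨ρ', ⟨-, c, hc⟩, hlt⟩ :=
    exists_lt_of_csInf_lt (s := {ρ | 0 ≤ ρ ∧ ∃ c, K ⊆ closedBall c ρ}) ⟨ρ₀, hρ₀.le, 0, h₀⟩ h
  exact ⟨c, hc.trans (closedBall_subset_closedBall hlt.le)⟩

theorem inradius_le {B : ℝ} (hB : 0 ≤ B) (h : ∀ c ρ, 0 ≤ ρ → closedBall c ρ ⊆ K → ρ ≤ B) :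
    inradius K ≤ B :=
  Real.sSup_le (fun ρ ⟨hρ, c, hc⟩ => h c ρ hρ hc) hB

theorem width_eq_sInf_breadth (K : Set (EuclideanSpace ℝ (Fin n))) :
    width K = sInf (breadth K '' sphere 0 1) := by
  rw [width]
  congr 1
  ext b
  simp only [mem_ofPred_eq, mem_image, mem_sphere_zero_iff_norm,
    sInf_image_inner_eq_neg_supportFun, sub_neg_eq_add]
  exact exists_congr fun u => and_congr_right fun _ => eq_comm

theorem width_le_breadth (hK : IsCompact K) (hne : K.Nonempty) (hu : ‖u‖ = 1) :
    width K ≤ breadth K u :=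
  width_eq_sInf_breadth K ▸ csInf_le ⟨0, forall_mem_image.2 fun u _ => breadth_nonneg hK hne u⟩
    (mem_image_of_mem _ (mem_sphere_zero_iff_norm.2 hu))

theorem breadth_eq_diam_of_diam_eq_width (hK : IsCompact K) (hne : K.Nonempty)
    (h : diam K = width K) (hu : ‖u‖ = 1) : breadth K u = diam K :=
  le_antisymm (breadth_le_diam hK hne hu) (h ▸ width_le_breadth hK hne hu)

variable [Nontrivial (EuclideanSpace ℝ (Fin n))]

theorem le_inradius (hK : IsBounded K) (hρ : 0 ≤ ρ) (h : closedBall c ρ ⊆ K) :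
    ρ ≤ inradius K := by
  refine le_csSup ⟨diam K, fun ρ ⟨hρ, c, hc⟩ => ?_⟩ ⟨hρ, c, h⟩
  linarith [diam_closedBall_eq c hρ ▸ diam_mono hc hK]

theorem inradius_nonneg (hK : IsBounded K) (hne : K.Nonempty) : 0 ≤ inradius K := by
  obtain ⟨x, hx⟩ := hne
  exact le_inradius hK le_rfl (closedBall_zero (x := x) ▸ singleton_subset_iff.2 hx)

/-- The centre of a largest ball in `K` maximises the distance to `Kᶜ` over `K`. -/
theorem exists_closedBall_inradius_subset (hK : IsCompact K) (hne : K.Nonempty) :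
    ∃ a, closedBall a (inradius K) ⊆ K := by
  have hKc : Kᶜ.Nonempty :=
    nonempty_compl.2 fun h => NormedSpace.unbounded_univ ℝ _ (h ▸ hK.isBounded)
  obtain ⟨a, ha, hmax⟩ := hK.exists_isMaxOn hne
    (continuous_infDist_pt (Kᶜ : Set (EuclideanSpace ℝ (Fin n)))).continuousOn
  have hle : ∀ c ρ, 0 ≤ ρ → closedBall c ρ ⊆ K → ρ ≤ infDist a Kᶜ := fun c ρ hρ hc =>
    ((le_infDist hKc).2 fun y hy => le_of_lt (by simpa [dist_comm] using mt (@hc y) hy)).trans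
      (hmax (hc (mem_closedBall_self hρ)))
  have hd : 0 ≤ infDist a Kᶜ := infDist_nonneg
  refine ⟨a, (closedBall_subset_closedBall (inradius_le hd hle)).trans ?_⟩
  rcases hd.eq_or_lt with h0 | hpos
  · rw [← h0, closedBall_zero]
    exact singleton_subset_iff.2 ha
  · rw [← closure_ball a hpos.ne']
    exact closure_minimal ball_infDist_compl_subset hK.isClosed

theorem width_image2_smul_add_smul (hK : IsCompact K) (hKne : K.Nonempty) (hC : IsCompact C)
    (hCne : C.Nonempty) (hCw : diam C = width C) {s t : ℝ} (hs : 0 ≤ s) (ht : 0 ≤ t) :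
    width (image2 (fun x y => s • x + t • y) K C) = s * width K + t * width C := by
  have hbreadth : ∀ u ∈ sphere (0 : EuclideanSpace ℝ (Fin n)) 1,
      breadth (image2 (fun x y => s • x + t • y) K C) u = s * breadth K u + t * width C := by
    intro u hu
    have hCu := breadth_eq_diam_of_diam_eq_width hC hCne hCw (mem_sphere_zero_iff_norm.1 hu)
    rw [breadth, hCw] at hCu
    rw [breadth, breadth, supportFun_image2_smul_add_smul hK hKne hC hCne hs ht,
      supportFun_image2_smul_add_smul hK hKne hC hCne hs ht]
    linear_combination t * hCu
  rw [width_eq_sInf_breadth, width_eq_sInf_breadth, image_congr hbreadth,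
    ← image_image (fun b => s * b + t * width C)]
  exact (((monotone_id.const_mul hs).add_const _).map_csInf_of_continuousAt (by fun_prop)
    ((NormedSpace.sphere_nonempty.2 zero_le_one).image _)
    ⟨0, forall_mem_image.2 fun u _ => breadth_nonneg hK hKne u⟩).symm

theorem inradius_eq_diam_sub_circumradius (hC : IsCompact C) (hcv : Convex ℝ C)
    (hne : C.Nonempty) (hCw : diam C = width C) : inradius C = diam C - circumradius C := by
  refine le_antisymm (inradius_le ?_ fun c ρ hρ hc => ?_) (le_of_forall_pos_le_add fun ε hε => ?_)
  · linarith [circumradius_le_diam hC.isBounded hne]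
  · have hsub := subset_closedBall_diam_sub hC.isBounded hρ hc
    have := mem_closedBall.1 (hsub (hc (mem_closedBall_self hρ)))
    rw [dist_self] at this
    linarith [circumradius_le this hsub]
  · obtain ⟨c, hc⟩ :=
      exists_subset_closedBall_of_circumradius_lt hC.isBounded (lt_add_of_pos_right _ hε)
    rcases le_or_gt (diam C - (circumradius C + ε)) 0 with hneg | hpos
    · linarith [inradius_nonneg hC.isBounded hne]
    -- `h_C(u) = D - h_C(-u)`, and `h_C(-u)` is bounded by the ball of radius `R + ε` around `c`.
    have hball : closedBall c (diam C - (circumradius C + ε)) ⊆ C := by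
      refine closedBall_subset_of_forall_inner_add_le_supportFun hC hcv hne fun u hu => ?_
      have h1 :=
        supportFun_le_inner_add_of_subset_closedBall (u := -u) hne hc (by rwa [norm_neg])
      have h2 := breadth_eq_diam_of_diam_eq_width hC hne hCw hu
      rw [inner_neg_left] at h1
      rw [breadth] at h2
      linarith
    linarith [le_inradius hC.isBounded hpos.le hball]

theorem le_inradius_image2_smul_add_smul (hK : IsCompact K) (hKne : K.Nonempty)
    (hC : IsCompact C) (hCne : C.Nonempty) {s t : ℝ} (hs : 0 ≤ s) (ht : 0 ≤ t) :
    s * inradius K + t * inradius C ≤ inradius (image2 (fun x y => s • x + t • y) K C) := by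
  obtain ⟨a, ha⟩ := exists_closedBall_inradius_subset hK hKne
  obtain ⟨b, hb⟩ := exists_closedBall_inradius_subset hC hCne
  have hrK := inradius_nonneg hK.isBounded hKne
  have hrC := inradius_nonneg hC.isBounded hCne
  exact le_inradius (hK.image2 hC (by fun_prop)).isBounded (by positivity)
    ((closedBall_smul_add_smul_subset_image2 hs ht hrK hrC a b).trans (image2_subset ha hb))

/-- For a ball `closedBall c ρ ⊆ K_λ`, take a contact direction `u` of a largest ball
`closedBall a r` of `K` with `⟪u, a - c⟫ ≤ 0`: then `h_K(u) = ⟪u, a⟫ + r`, and `w(K) = r + R`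
together with `h_C(u) + h_C(-u) ≤ D` gives `h_C(u) ≤ ⟪u, a⟫ + D - R`. -/
theorem inradius_image2_le (hK : IsCompact K) (hcv : Convex ℝ K) (hKne : K.Nonempty)
    (hC : IsCompact C) (hKC : K ⊆ C) (hw : width K = inradius K + circumradius K) {lam : ℝ}
    (h0 : 0 ≤ lam) (h1 : lam ≤ 1) :
    inradius (image2 (fun x y => lam • x + (1 - lam) • y) K C) ≤
      lam * inradius K + (1 - lam) * (diam C - circumradius K) := by
  have hCne : C.Nonempty := hKne.mono hKC
  have hrK := inradius_nonneg hK.isBounded hKne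
  have hRD : circumradius K ≤ diam C :=
    (circumradius_le_diam hK.isBounded hKne).trans (diam_mono hKC hC.isBounded)
  obtain ⟨a, ha⟩ := exists_closedBall_inradius_subset hK hKne
  refine inradius_le (by nlinarith) fun c ρ hρ hball => ?_
  obtain ⟨u, hu, hcontact, hua⟩ := exists_contact_direction_inner_nonpos hK hcv hKne hrK ha
    (fun c ρ hρ hc => le_inradius hK.isBounded hρ hc) (a - c)
  have hKu := hw ▸ width_le_breadth hK hKne hu
  have hCu := breadth_le_diam hC hCne hu
  have hKCu : supportFun K (-u) ≤ supportFun C (-u) := supportFun_mono hKne hC hKC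
  have hCu' : supportFun C u ≤ ⟪u, a⟫ + (diam C - circumradius K) := by
    rw [breadth] at hKu hCu
    linarith
  have hρu :=
    inner_add_le_supportFun_of_closedBall_subset (hK.image2 hC (by fun_prop)) hball hρ hu
  rw [supportFun_image2_smul_add_smul hK hKne hC hCne h0 (sub_nonneg.2 h1), hcontact] at hρu
  rw [inner_sub_right] at hua
  nlinarith [mul_le_mul_of_nonneg_left hCu' (sub_nonneg.2 h1)]

end ConvexBody

theorem scott_completion_combination (n : ℕ) (K C : Set (EuclideanSpace ℝ (Fin n)))
    (hKne : K.Nonempty) (hKcp : IsCompact K) (hKcv : Convex ℝ K)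
    (hCne : C.Nonempty) (hCcp : IsCompact C) (hCcv : Convex ℝ C)
    (hKC : K ⊆ C) (hDC : sDiam K = sDiam C) (hwC : sDiam C = width C)
    (hRC : circumradius K = circumradius C)
    (hw : width K = inradius K + circumradius K) :
    ∀ lam ∈ Set.Icc (0 : ℝ) 1,
      inradius (Set.image2 (fun x y => lam • x + (1 - lam) • y) K C) =
        lam * inradius K + (1 - lam) * inradius C ∧
      circumradius (Set.image2 (fun x y => lam • x + (1 - lam) • y) K C) =
        circumradius K ∧
      sDiam (Set.image2 (fun x y => lam • x + (1 - lam) • y) K C) = sDiam K ∧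
      width (Set.image2 (fun x y => lam • x + (1 - lam) • y) K C) =
        lam * width K + (1 - lam) * width C ∧
      width (Set.image2 (fun x y => lam • x + (1 - lam) • y) K C) =
        inradius (Set.image2 (fun x y => lam • x + (1 - lam) • y) K C) +
          circumradius (Set.image2 (fun x y => lam • x + (1 - lam) • y) K C) := by
  rintro lam ⟨h0, h1⟩
  set L := image2 (fun x y => lam • x + (1 - lam) • y) K C
  have hLne : L.Nonempty := hKne.image2 hCne
  rcases subsingleton_or_nontrivial (EuclideanSpace ℝ (Fin n)) with hE | hE
  · rw [hLne.eq_univ, hCne.eq_univ, ← hKne.eq_univ]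
    exact ⟨by ring, rfl, rfl, by ring, hw⟩
  have hL : IsCompact L := hKcp.image2 hCcp (by fun_prop)
  have hKL : K ⊆ L := fun x hx =>
    ⟨x, hx, x, hKC hx, by simp only [← add_smul, add_sub_cancel, one_smul]⟩
  have hLC : L ⊆ C :=
    image2_subset_iff.2 fun x hx y hy => hCcv (hKC hx) hy h0 (by linarith) (by ring)
  have hrC : inradius C = sDiam C - circumradius C :=
    inradius_eq_diam_sub_circumradius hCcp hCcv hCne hwC
  have hr : inradius L = lam * inradius K + (1 - lam) * inradius C :=
    le_antisymm (hrC ▸ hRC ▸ inradius_image2_le hKcp hKcv hKne hCcp hKC hw h0 h1)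
      (le_inradius_image2_smul_add_smul hKcp hKne hCcp hCne h0 (sub_nonneg.2 h1))
  have hR : circumradius L = circumradius K :=
    le_antisymm (hRC ▸ circumradius_mono hLC hCcp.isBounded) (circumradius_mono hKL hL.isBounded)
  have hD : sDiam L = sDiam K :=
    le_antisymm (hDC ▸ diam_mono hLC hCcp.isBounded) (diam_mono hKL hL.isBounded)
  have hwL : width L = lam * width K + (1 - lam) * width C :=
    width_image2_smul_add_smul hKcp hKne hCcp hCne hwC h0 (sub_nonneg.2 h1)
  refine ⟨hr, hR, hD, hwL, ?_⟩
  rw [hwL, hr, hR, hrC, hw, ← hwC, ← hRC]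
  ring
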